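/- Let p ∈ ℕ, p ≥ 1, C > 0, q > 0, and V(z) := (1+q)C|z|^{2p} + q·log(1/|z|). Set R := (2pC)^{−1/(2p)} and ρ := (q/(2pC(1+q)))^{1/(2p)}, and let μ be the measure with density ((1+q)·2p²C/π)·|z|^{2p−2} with respect to dA, restricted to the closed annulus {z : ρ ≤ |z| ≤ R}. Then μ is a probability measure, and there exists a constant F₀ such that ∫ log(1/|w−z|) dμ(w) + V(z) = F₀ for all z with ρ ≤ |z| ≤ R, and ∫ log(1/|w−z|) dμ(w) + V(z) ≥ F₀ for all z ∈ ℂ \ {0}. (Hence, by Frostman's theorem, the support of the equilibrium measure for V is the annulus {ρ ≤ |z| ≤ R}.) -/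

import Mathlib

/-!
On the circle `|w| = r` the average of `log |w - z|` is `log (max r |z|)`, so in polar coordinates
the potential of the radial density `c r ^ n` on the annulus `a ≤ |w| ≤ b` becomes a
one-variable integral that can be evaluated in closed form. Put `k = n + 2`, `t = |z|` and let `s`
be the point of `[a, b]` nearest to `t`. The radii are chosen so that `(1 + q) C k a ^ k = q` and
`C k b ^ k = 1`; with these, the terms in `log t` cancel, and `logPot μ z + V z` equals a
constant plus `(1 + q) C (t ^ k - s ^ k - k s ^ k log (t / s))`. This bracket vanishes when `t = s`,
i.e. on the annulus, and is nonnegative everywhere because `t ^ k = s ^ k exp (k log (t / s))` and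
`exp x ≥ 1 + x`.
-/

open MeasureTheory Metric Set Complex

noncomputable section

/-- Laplacian of a function on `ℂ ≅ ℝ²`: `ΔQ = ∂²Q/∂x² + ∂²Q/∂y²`. -/
def lap (Q : ℂ → ℝ) (z : ℂ) : ℝ :=
  iteratedFDeriv ℝ 2 Q z ![(1 : ℂ), 1] + iteratedFDeriv ℝ 2 Q z ![Complex.I, Complex.I]

/-- The Wirtinger derivative `∂Q = (∂Q/∂x − i ∂Q/∂y)/2` of a real-valued function on `ℂ`. -/
def wirt (Q : ℂ → ℝ) (z : ℂ) : ℂ :=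
  (1 / 2 : ℂ) * (((fderiv ℝ Q z 1 : ℝ) : ℂ) - Complex.I * ((fderiv ℝ Q z Complex.I : ℝ) : ℂ))

/-- A parametrization of the boundary of a smooth bounded domain `Ω ⊆ ℂ`: finitely many
pairwise disjoint `C^∞` embeddings of the circle covering `frontier Ω`, positively oriented
(total winding number `1` around points of `Ω` and `0` around points off `closure Ω`). -/
structure BoundaryParam (Ω : Set ℂ) where
  n : ℕ
  γ : Fin n → ℝ → ℂ
  smooth : ∀ i, ContDiff ℝ (⊤ : ℕ∞) (γ i)
  periodic : ∀ i, Function.Periodic (γ i) (2 * Real.pi)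
  injOn : ∀ i, Set.InjOn (γ i) (Set.Ico 0 (2 * Real.pi))
  deriv_ne : ∀ i, ∀ t, deriv (γ i) t ≠ 0
  cover : frontier Ω = ⋃ i, Set.range (γ i)
  disj : Pairwise (fun i j => Disjoint (Set.range (γ i)) (Set.range (γ j)))
  orient_in : ∀ z ∈ Ω,
    (∑ i, ∫ t in (0:ℝ)..(2 * Real.pi), deriv (γ i) t / (γ i t - z)) = 2 * Real.pi * Complex.I
  orient_out : ∀ z, z ∉ closure Ω →
    (∑ i, ∫ t in (0:ℝ)..(2 * Real.pi), deriv (γ i) t / (γ i t - z)) = 0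

/-- Contour integral `∫_{∂Ω} g(z) dz` over the positively oriented boundary of `Ω`,
computed through a boundary parametrization. -/
def contourIntegral {Ω : Set ℂ} (P : BoundaryParam Ω) (g : ℂ → ℂ) : ℂ :=
  ∑ i, ∫ t in (0:ℝ)..(2 * Real.pi), g (P.γ i t) * deriv (P.γ i) t

/-- `A^∞(Ω)`: holomorphic on `Ω` and `C^∞`-smooth up to the boundary. -/
def AInfty (Ω : Set ℂ) (f : ℂ → ℂ) : Prop :=
  DifferentiableOn ℂ f Ω ∧ ContDiffOn ℝ (⊤ : ℕ∞) f (closure Ω)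

/-- The logarithmic potential `∫ log(1/|w−z|) dμ(w)` of a measure `μ` on `ℂ`. -/
def logPot (μ : Measure ℂ) (z : ℂ) : ℝ := ∫ w, Real.log (1 / ‖w - z‖) ∂μ

/-- `R = (2pC)^{−1/(2p)}`, the radius of the equilibrium support for `Q(z) = C|z|^{2p}`. -/
def Rrad (p : ℕ) (C : ℝ) : ℝ := (2 * (p : ℝ) * C) ^ (-(1 : ℝ) / (2 * (p : ℝ)))

open Real Module

theorem rpow_div_natCast_pow {x : ℝ} (hx : 0 ≤ x) (y : ℝ) {k : ℕ} (hk : k ≠ 0) :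
    (x ^ (y / k)) ^ k = x ^ y := by
  rw [← rpow_mul_natCast hx, div_mul_cancel₀ _ (Nat.cast_ne_zero.2 hk)]

theorem abs_log_le_mul_rpow_neg_half {r t : ℝ} (ht : 0 ≤ t) (htr : t ≤ r) :
    |Real.log t| ≤ 2 * (1 + r) * t ^ (-(1 / 2 : ℝ)) := by
  rcases ht.eq_or_lt with rfl | ht
  · simp
  have hsqrt : 0 < t ^ (1 / 2 : ℝ) := Real.rpow_pos_of_pos ht _
  rw [Real.rpow_neg ht.le, ← div_eq_mul_inv, le_div_iff₀ hsqrt]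
  rcases le_or_gt t 1 with ht1 | ht1
  · have := Real.abs_log_mul_self_rpow_lt t (1 / 2) ht ht1 one_half_pos
    rw [abs_mul, abs_of_pos hsqrt] at this
    nlinarith
  · have hlog := Real.log_le_rpow_div ht.le (one_half_pos (α := ℝ))
    have hsq : t ^ (1 / 2 : ℝ) * t ^ (1 / 2 : ℝ) = t := by
      rw [← Real.rpow_add ht]; norm_num
    rw [abs_of_nonneg (Real.log_nonneg ht1.le)]
    nlinarith

theorem locallyIntegrable_log_norm {E : Type*} [NormedAddCommGroup E] [NormedSpace ℝ E]
    [FiniteDimensional ℝ E] [MeasurableSpace E] [BorelSpace E] {μ : Measure E}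
    [μ.IsAddHaarMeasure] (hE : 1 ≤ finrank ℝ E) :
    LocallyIntegrable (fun x : E ↦ Real.log ‖x‖) μ := by
  rw [locallyIntegrable_iff]
  intro K hK
  obtain ⟨r, -, hKr⟩ := hK.isBounded.exists_pos_norm_lt
  have hbound : ∀ᵐ x ∂μ.restrict (ball 0 r), ‖Real.log ‖x‖‖ ≤ 2 * (1 + r) * ‖x‖ ^ (-(1 / 2 : ℝ)) :=
    (ae_restrict_iff' measurableSet_ball).2 <| ae_of_all _ fun x hx ↦
      abs_log_le_mul_rpow_neg_half (norm_nonneg x) (mem_ball_zero_iff.1 hx).le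
  have hα : (1 / 2 : ℝ) < finrank ℝ E := by
    have : (1 : ℝ) ≤ finrank ℝ E := by exact_mod_cast hE
    linarith
  exact (integrableOn_ball_of_norm_le_rpow hE hα hbound
    (Real.measurable_log.comp measurable_norm).aestronglyMeasurable).mono_set
    fun x hx ↦ mem_ball_zero_iff.2 (hKr x hx)

theorem locallyIntegrable_log_norm_sub {E : Type*} [NormedAddCommGroup E] [NormedSpace ℝ E]
    [FiniteDimensional ℝ E] [MeasurableSpace E] [BorelSpace E] {μ : Measure E}
    [μ.IsAddHaarMeasure] (hE : 1 ≤ finrank ℝ E) (z : E) :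
    LocallyIntegrable (fun x : E ↦ Real.log ‖x - z‖) μ := by
  have := (locallyIntegrable_map_homeomorph (Homeomorph.subRight z) (μ := μ)
    (f := fun x ↦ Real.log ‖x‖)).1
  rw [Homeomorph.coe_subRight, map_sub_right_eq_self] at this
  exact this (locallyIntegrable_log_norm hE)

theorem Complex.polarCoord_symm_eq_circleMap (p : ℝ × ℝ) :
    Complex.polarCoord.symm p = circleMap 0 p.1 p.2 := by
  simp [circleMap, Complex.exp_mul_I]

theorem Complex.integrableOn_polarCoord_target {E : Type*} [NormedAddCommGroup E]
    [NormedSpace ℝ E] {f : ℂ → E} (hf : Integrable f) :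
    IntegrableOn (fun p : ℝ × ℝ ↦ p.1 • f (Complex.polarCoord.symm p)) polarCoord.target := by
  have hg : Integrable (f ∘ measurableEquivRealProd.symm) :=
    (Complex.volume_preserving_equiv_real_prod.symm).integrable_comp_emb
      measurableEquivRealProd.symm.measurableEmbedding |>.2 hf
  have := (integrableOn_image_iff_integrableOn_abs_det_fderiv_smul volume
    polarCoord.open_target.measurableSet
    (fun p _ ↦ (hasFDerivAt_polarCoord_symm p).hasFDerivWithinAt) polarCoord.symm.injOn _).1
    hg.integrableOn
  refine this.congr_fun (fun p hp ↦ ?_) polarCoord.open_target.measurableSet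
  have hp1 : 0 < p.1 := hp.1
  simp only [det_fderivPolarCoordSymm, abs_of_pos hp1]
  rfl

theorem integral_eq_integral_Ioi_circleAverage {E : Type*} [NormedAddCommGroup E]
    [NormedSpace ℝ E] {f : ℂ → E} (hf : Integrable f) :
    ∫ w, f w = ∫ r in Ioi 0, (2 * π * r) • circleAverage f 0 r := by
  rw [← Complex.integral_comp_polarCoord_symm, polarCoord_target,
    Measure.volume_eq_prod, setIntegral_prod _ (Complex.integrableOn_polarCoord_target hf)]
  refine setIntegral_congr_fun measurableSet_Ioi fun r _ ↦ ?_
  have hper : circleAverage f 0 r = (2 * π)⁻¹ • ∫ θ in -π..π, f (circleMap 0 r θ) := by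
    rw [circleAverage_eq_integral_add (-π),
      intervalIntegral.integral_comp_add_right (fun θ ↦ f (circleMap 0 r θ))]
    ring_nf
  rw [hper, smul_smul, integral_smul, intervalIntegral.integral_of_le (by linarith [pi_pos]),
    integral_Ioc_eq_integral_Ioo]
  simp_rw [Complex.polarCoord_symm_eq_circleMap]
  field_simp

theorem circleAverage_log_norm_sub_const_eq_log_max {r : ℝ} (hr : 0 < r) (z : ℂ) :
    circleAverage (fun w ↦ Real.log ‖w - z‖) 0 r = Real.log (max r ‖z‖) := by
  rw [circleAverage_log_norm_sub_const_eq_log_radius_add_posLog hr.ne', zero_sub, norm_neg,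
    posLog_eq_log_max_one (by positivity), ← Real.log_mul hr.ne' (by positivity),
    mul_max_of_nonneg _ _ hr.le, mul_one, mul_inv_cancel_left₀ hr.ne']

def closedAnnulus (a b : ℝ) : Set ℂ := {z | a ≤ ‖z‖ ∧ ‖z‖ ≤ b}

def annulusMeasure (a b : ℝ) (φ : ℝ → ℝ) : Measure ℂ :=
  (volume.restrict (closedAnnulus a b)).withDensity fun w ↦ ENNReal.ofReal (φ ‖w‖)

section Annulus

variable {a b : ℝ} {φ : ℝ → ℝ}

theorem isCompact_closedAnnulus : IsCompact (closedAnnulus a b) :=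
  (isCompact_closedBall (0 : ℂ) b).of_isClosed_subset
    ((isClosed_le continuous_const continuous_norm).inter
      (isClosed_le continuous_norm continuous_const))
    fun _ hz ↦ mem_closedBall_zero_iff.2 hz.2

theorem measurableSet_closedAnnulus : MeasurableSet (closedAnnulus a b) :=
  isCompact_closedAnnulus.isClosed.measurableSet

theorem sphere_subset_closedAnnulus (ha : 0 ≤ a) {r : ℝ} (hr : r ∈ Icc a b) :
    sphere (0 : ℂ) |r| ⊆ closedAnnulus a b := by
  intro w hw
  rw [mem_sphere_zero_iff_norm, abs_of_nonneg (ha.trans hr.1)] at hw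
  exact ⟨hw ▸ hr.1, hw ▸ hr.2⟩

theorem setIntegral_closedAnnulus {E : Type*} [NormedAddCommGroup E] [NormedSpace ℝ E]
    [CompleteSpace E] (ha : 0 < a) {g : ℂ → E} (hg : IntegrableOn g (closedAnnulus a b)) :
    ∫ w in closedAnnulus a b, g w = ∫ r in Icc a b, (2 * π * r) • circleAverage g 0 r := by
  rw [← integral_indicator measurableSet_closedAnnulus,
    integral_eq_integral_Ioi_circleAverage (hg.integrable_indicator measurableSet_closedAnnulus)]
  have hIcc : Ioi 0 ∩ Icc a b = Icc a b := inter_eq_right.2 fun r hr ↦ mem_Ioi.2 (ha.trans_le hr.1)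
  rw [← hIcc, ← setIntegral_indicator measurableSet_Icc]
  refine setIntegral_congr_fun measurableSet_Ioi fun r hr ↦ ?_
  by_cases hrab : r ∈ Icc a b
  · rw [indicator_of_mem hrab, circleAverage_congr_sphere fun w hw ↦
      indicator_of_mem (sphere_subset_closedAnnulus ha.le hrab hw) g]
  · have hzero : ∀ w ∈ sphere (0 : ℂ) |r|, (closedAnnulus a b).indicator g w = 0 := by
      intro w hw
      refine indicator_of_notMem (fun hwA ↦ hrab ?_) g
      rw [mem_sphere_zero_iff_norm, abs_of_pos (mem_Ioi.1 hr)] at hw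
      exact ⟨hw ▸ hwA.1, hw ▸ hwA.2⟩
    rw [indicator_of_notMem hrab, circleAverage_const_on_circle hzero, smul_zero]

theorem setIntegral_closedAnnulus_norm_mul (ha : 0 < a) {g : ℂ → ℝ}
    (hg : IntegrableOn (fun w ↦ φ ‖w‖ * g w) (closedAnnulus a b)) :
    ∫ w in closedAnnulus a b, φ ‖w‖ * g w =
      ∫ r in Icc a b, 2 * π * r * φ r * circleAverage g 0 r := by
  rw [setIntegral_closedAnnulus ha hg]
  refine setIntegral_congr_fun measurableSet_Icc fun r hr ↦ ?_
  have hnorm : EqOn (fun w ↦ φ ‖w‖ * g w) (φ r • g) (sphere 0 |r|) := by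
    intro w hw
    rw [mem_sphere_zero_iff_norm, abs_of_pos (ha.trans_le hr.1)] at hw
    simp [hw]
  rw [circleAverage_congr_sphere hnorm, circleAverage_smul, smul_eq_mul, smul_eq_mul]
  ring

theorem integral_annulusMeasure (hφ : Measurable φ) (hφ0 : ∀ r ∈ Icc a b, 0 ≤ φ r) (g : ℂ → ℝ) :
    ∫ w, g w ∂annulusMeasure a b φ = ∫ w in closedAnnulus a b, φ ‖w‖ * g w := by
  rw [annulusMeasure, integral_withDensity_eq_integral_toReal_smul
    (by fun_prop) (ae_of_all _ fun _ ↦ ENNReal.ofReal_lt_top)]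
  refine setIntegral_congr_fun measurableSet_closedAnnulus fun w hw ↦ ?_
  rw [ENNReal.toReal_ofReal (hφ0 _ hw), smul_eq_mul]

theorem isProbabilityMeasure_annulusMeasure (ha : 0 < a) (hφ : Continuous φ)
    (hφ0 : ∀ r ∈ Icc a b, 0 ≤ φ r) (hmass : ∫ r in Icc a b, 2 * π * r * φ r = 1) :
    IsProbabilityMeasure (annulusMeasure a b φ) := by
  have hint : IntegrableOn (fun w : ℂ ↦ φ ‖w‖ * 1) (closedAnnulus a b) :=
    (by fun_prop : Continuous fun w : ℂ ↦ φ ‖w‖ * 1).continuousOn.integrableOn_compact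
      isCompact_closedAnnulus
  have h := integral_annulusMeasure hφ.measurable hφ0 fun _ ↦ 1
  rw [setIntegral_closedAnnulus_norm_mul ha hint, integral_const, smul_eq_mul, mul_one] at h
  simp_rw [circleAverage_const, mul_one, hmass] at h
  exact ⟨(ENNReal.toReal_eq_one_iff _).1 h⟩

theorem logPot_annulusMeasure (ha : 0 < a) (hφ : Continuous φ) (hφ0 : ∀ r ∈ Icc a b, 0 ≤ φ r)
    (z : ℂ) :
    logPot (annulusMeasure a b φ) z =
      -∫ r in Icc a b, 2 * π * r * φ r * Real.log (max r ‖z‖) := by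
  have hlog : IntegrableOn (fun w ↦ Real.log ‖w - z‖) (closedAnnulus a b) :=
    (locallyIntegrable_log_norm_sub (by simp) z).integrableOn_isCompact isCompact_closedAnnulus
  have hint : IntegrableOn (fun w ↦ φ ‖w‖ * Real.log ‖w - z‖) (closedAnnulus a b) :=
    hlog.continuousOn_mul (hφ.comp continuous_norm).continuousOn isCompact_closedAnnulus
  simp_rw [logPot, integral_annulusMeasure hφ.measurable hφ0, one_div, Real.log_inv, mul_neg,
    integral_neg, setIntegral_closedAnnulus_norm_mul ha hint]
  refine congrArg Neg.neg (setIntegral_congr_fun measurableSet_Icc fun r hr ↦ ?_)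
  rw [circleAverage_log_norm_sub_const_eq_log_max (ha.trans_le hr.1)]

end Annulus

section RadialIntegrals

variable {a b : ℝ}

theorem hasDerivAt_pow_succ_mul_log_sub (m : ℕ) {r : ℝ} (hr : 0 < r) :
    HasDerivAt (fun x ↦ x ^ (m + 1) * (Real.log x - 1 / (m + 1)) / (m + 1))
      (r ^ m * Real.log r) r := by
  have h := ((hasDerivAt_pow (m + 1) r).fun_mul ((Real.hasDerivAt_log hr.ne').sub_const
    (1 / ((m : ℝ) + 1)))).div_const ((m : ℝ) + 1)
  refine h.congr_deriv ?_
  rw [Nat.add_sub_cancel, pow_succ]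
  field_simp
  push_cast
  ring

theorem integral_pow_mul_log (m : ℕ) (ha : 0 < a) (hab : a ≤ b) :
    ∫ r in a..b, r ^ m * Real.log r =
      b ^ (m + 1) * (Real.log b - 1 / (m + 1)) / (m + 1) -
        a ^ (m + 1) * (Real.log a - 1 / (m + 1)) / (m + 1) := by
  have hpos : ∀ r ∈ uIcc a b, 0 < r := fun r hr ↦ ha.trans_le (by simpa [hab] using hr.1)
  refine intervalIntegral.integral_eq_sub_of_hasDerivAt
    (fun r hr ↦ hasDerivAt_pow_succ_mul_log_sub m (hpos r hr)) ?_
  exact ContinuousOn.intervalIntegrable fun r hr ↦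
    ((continuous_pow m).continuousAt.mul (Real.continuousAt_log (hpos r hr).ne')).continuousWithinAt

/-- `max a (min t b)` is the point of `[a, b]` nearest to `t`; to its left `max r t = t`, to its
right `max r t = r`. -/
theorem integral_pow_mul_log_max (m : ℕ) (ha : 0 < a) (hab : a ≤ b) (t : ℝ) :
    ∫ r in a..b, r ^ m * Real.log (max r t) =
      Real.log t * (max a (min t b) ^ (m + 1) - a ^ (m + 1)) / (m + 1) +
        (b ^ (m + 1) * (Real.log b - 1 / (m + 1)) / (m + 1) -
          max a (min t b) ^ (m + 1) * (Real.log (max a (min t b)) - 1 / (m + 1)) / (m + 1)) := by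
  set s := max a (min t b)
  have has : a ≤ s := le_max_left _ _
  have hsb : s ≤ b := max_le hab (min_le_right _ _)
  have hint : IntervalIntegrable (fun r ↦ r ^ m * Real.log (max r t)) volume a b :=
    ContinuousOn.intervalIntegrable fun r hr ↦ by
      rw [uIcc_of_le hab] at hr
      have hr0 : max r t ≠ 0 := (lt_max_of_lt_left (ha.trans_le hr.1)).ne'
      exact ((continuous_pow m).continuousAt.mul
        ((continuous_id.max continuous_const).continuousAt.log hr0)).continuousWithinAt
  rw [← intervalIntegral.integral_add_adjacent_intervals
    (hint.mono_set (uIcc_subset_uIcc_left (Icc_subset_uIcc ⟨has, hsb⟩)))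
    (hint.mono_set (uIcc_subset_uIcc_right (Icc_subset_uIcc ⟨has, hsb⟩)))]
  have hlow : ∫ r in a..s, r ^ m * Real.log (max r t) = ∫ r in a..s, r ^ m * Real.log t := by
    refine intervalIntegral.integral_congr_ae (ae_of_all _ fun r hr ↦ ?_)
    rw [uIoc_of_le has] at hr
    have : r ≤ t := by
      rcases le_max_iff.1 hr.2 with h | h
      · exact absurd hr.1 h.not_gt
      · exact h.trans (min_le_left _ _)
    rw [max_eq_right this]
  have hhigh : ∫ r in s..b, r ^ m * Real.log (max r t) = ∫ r in s..b, r ^ m * Real.log r := by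
    refine intervalIntegral.integral_congr_ae (ae_of_all _ fun r hr ↦ ?_)
    rw [uIoc_of_le hsb] at hr
    have : t ≤ r := by
      rcases min_lt_iff.1 ((le_max_right a (min t b)).trans_lt hr.1) with h | h
      · exact h.le
      · exact absurd hr.2 h.not_ge
    rw [max_eq_left this]
  rw [hlow, hhigh, intervalIntegral.integral_mul_const, integral_pow,
    integral_pow_mul_log m (ha.trans_le has) hsb]
  ring

end RadialIntegrals

def powLogGap (k : ℕ) (s t : ℝ) : ℝ := t ^ k - s ^ k - k * s ^ k * (Real.log t - Real.log s)

theorem powLogGap_self (k : ℕ) (t : ℝ) : powLogGap k t t = 0 := by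
  simp [powLogGap]

theorem powLogGap_nonneg (k : ℕ) {s t : ℝ} (hs : 0 < s) (ht : 0 < t) : 0 ≤ powLogGap k s t := by
  have hexp : s ^ k * Real.exp (k * (Real.log t - Real.log s)) = t ^ k := by
    rw [Real.exp_nat_mul, Real.exp_sub, Real.exp_log hs, Real.exp_log ht, div_pow,
      mul_div_cancel₀ _ (pow_pos hs k).ne']
  have := mul_le_mul_of_nonneg_left (Real.add_one_le_exp (k * (Real.log t - Real.log s)))
    (pow_pos hs k).le
  rw [powLogGap]
  linarith

section PowerDensity

variable (n : ℕ) {C q a b c : ℝ}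

theorem isProbabilityMeasure_annulusMeasure_pow (hC : 0 < C) (hq : 0 < q) (ha : 0 < a)
    (hab : a ≤ b) (ha_pow : a ^ (n + 2) = q / ((n + 2) * C * (1 + q)))
    (hb_pow : b ^ (n + 2) = 1 / ((n + 2) * C)) (hc : c = (1 + q) * C * (n + 2) ^ 2 / (2 * π)) :
    IsProbabilityMeasure (annulusMeasure a b fun r ↦ c * r ^ n) := by
  have hc0 : 0 ≤ c := hc ▸ by positivity
  refine isProbabilityMeasure_annulusMeasure ha (by fun_prop)
    (fun r hr ↦ by have := ha.trans_le hr.1; positivity) ?_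
  rw [integral_Icc_eq_integral_Ioc, ← intervalIntegral.integral_of_le hab]
  have : ∫ r in a..b, 2 * π * r * (c * r ^ n) = 2 * π * c * ∫ r in a..b, r ^ (n + 1) := by
    rw [← intervalIntegral.integral_const_mul]
    congr 1 with r
    ring
  rw [this, integral_pow, ha_pow, hb_pow, hc]
  push_cast
  field_simp
  ring

theorem logPot_annulusMeasure_pow_add (hC : 0 < C) (hq : 0 < q) (ha : 0 < a)
    (hab : a ≤ b) (ha_pow : a ^ (n + 2) = q / ((n + 2) * C * (1 + q)))
    (hb_pow : b ^ (n + 2) = 1 / ((n + 2) * C)) (hc : c = (1 + q) * C * (n + 2) ^ 2 / (2 * π))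
    (z : ℂ) :
    logPot (annulusMeasure a b fun r ↦ c * r ^ n) z +
        ((1 + q) * C * ‖z‖ ^ (n + 2) + q * Real.log (1 / ‖z‖)) =
      (1 + q) * (1 / (n + 2) - Real.log b) +
        (1 + q) * C * powLogGap (n + 2) (max a (min ‖z‖ b)) ‖z‖ := by
  have hc0 : 0 ≤ c := hc ▸ by positivity
  rw [logPot_annulusMeasure ha (by fun_prop) (fun r hr ↦ by have := ha.trans_le hr.1; positivity),
    integral_Icc_eq_integral_Ioc, ← intervalIntegral.integral_of_le hab]
  have : ∫ r in a..b, 2 * π * r * (c * r ^ n) * Real.log (max r ‖z‖) =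
      2 * π * c * ∫ r in a..b, r ^ (n + 1) * Real.log (max r ‖z‖) := by
    rw [← intervalIntegral.integral_const_mul]
    congr 1 with r
    ring
  rw [this, integral_pow_mul_log_max (n + 1) ha hab, powLogGap, one_div ‖z‖, Real.log_inv,
    ha_pow, hb_pow, hc]
  push_cast
  field_simp
  ring

end PowerDensity

/-- for a point source at the origin added to `Q(z) = C|z|^{2p}`, the equilibrium
support is the annulus `ρ ≤ |z| ≤ R`, verified through the Frostman conditions. -/
theorem annulus_equilibrium
    (p : ℕ) (hp : 1 ≤ p) (C q : ℝ) (hC : 0 < C) (hq : 0 < q)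
    (μ : Measure ℂ)
    (hμ : μ = (volume.restrict
        {z : ℂ | (q / (2 * (p : ℝ) * C * (1 + q))) ^ ((1 : ℝ) / (2 * (p : ℝ))) ≤ ‖z‖ ∧
          ‖z‖ ≤ Rrad p C}).withDensity
        (fun z => ENNReal.ofReal
          ((1 + q) * 2 * (p : ℝ) ^ 2 * C / Real.pi * ‖z‖ ^ (2 * p - 2)))) :
    IsProbabilityMeasure μ ∧
    ∃ F₀ : ℝ,
      (∀ z : ℂ,
        (q / (2 * (p : ℝ) * C * (1 + q))) ^ ((1 : ℝ) / (2 * (p : ℝ))) ≤ ‖z‖ →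
        ‖z‖ ≤ Rrad p C →
        logPot μ z + ((1 + q) * C * ‖z‖ ^ (2 * p) +
          q * Real.log (1 / ‖z‖)) = F₀) ∧
      (∀ z : ℂ, z ≠ 0 →
        logPot μ z + ((1 + q) * C * ‖z‖ ^ (2 * p) +
          q * Real.log (1 / ‖z‖)) ≥ F₀) := by
  set n := 2 * p - 2
  have hn : 2 * p = n + 2 := by omega
  have hn2 : 2 * (p : ℝ) = (n + 2 : ℕ) := by exact_mod_cast hn
  set ρ := (q / (2 * (p : ℝ) * C * (1 + q))) ^ ((1 : ℝ) / (2 * (p : ℝ))) with hρ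
  set R := Rrad p C with hR
  have hρ_pow : ρ ^ (n + 2) = q / ((n + 2) * C * (1 + q)) := by
    rw [hρ, hn2, rpow_div_natCast_pow (by positivity) _ (by omega), rpow_one]
    norm_num
  have hR_pow : R ^ (n + 2) = 1 / ((n + 2) * C) := by
    rw [hR, Rrad, hn2, rpow_div_natCast_pow (by positivity) _ (by omega), rpow_neg_one, one_div]
    norm_num
  have hρ0 : 0 < ρ := by positivity
  have hρR : ρ ≤ R := by
    refine (pow_le_pow_iff_left₀ hρ0.le (by rw [hR, Rrad]; positivity)
      (by omega : n + 2 ≠ 0)).1 ?_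
    rw [hρ_pow, hR_pow, div_le_div_iff₀ (by positivity) (by positivity)]
    nlinarith
  have hc : (1 + q) * 2 * (p : ℝ) ^ 2 * C / π = (1 + q) * C * (n + 2) ^ 2 / (2 * π) := by
    rw [show (n : ℝ) + 2 = 2 * p by exact_mod_cast hn.symm]
    field_simp
  replace hμ : μ = annulusMeasure ρ R fun r ↦ (1 + q) * 2 * (p : ℝ) ^ 2 * C / π * r ^ n := hμ
  subst hμ
  have key := logPot_annulusMeasure_pow_add n hC hq hρ0 hρR hρ_pow hR_pow hc
  refine ⟨isProbabilityMeasure_annulusMeasure_pow n hC hq hρ0 hρR hρ_pow hR_pow hc,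
    (1 + q) * (1 / (n + 2) - Real.log R), fun z hρz hzR ↦ ?_, fun z hz ↦ ?_⟩
  · rw [hn, key, min_eq_left hzR, max_eq_right hρz, powLogGap_self, mul_zero, add_zero]
  · rw [hn, key, ge_iff_le, le_add_iff_nonneg_right]
    exact mul_nonneg (by positivity)
      (powLogGap_nonneg _ (lt_max_of_lt_left hρ0) (norm_pos_iff.2 hz))
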